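/- Let 𝒯 be a tree ensemble on ℝ^p, (z^L,z^R) a region, j a feature and l a level with z^L_j ≤ l < z^R_j. Then the conjunction [Φ(z^L,z^R_{jl}) = Φ(z^L_{jl},z^R) = 0 and F_𝒯(z^L) = F_𝒯(z^R)] holds if and only if Φ(z^L,z^R) = 0. Consequently, the indicator 𝟙_{jl}(z^L,z^R) takes the same value for all admissible pairs (j,l). -/

import Mathlib

/-- A decision tree on `ℝ^p`: either a leaf labeled with a class `c : ℕ`,
or an internal node splitting on feature `j` with threshold `t`. -/
inductive DTree (p : ℕ) : Type where
  | leaf (c : ℕ) : DTree p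
  | node (j : Fin p) (t : ℝ) (L R : DTree p) : DTree p

namespace DTree

/-- Evaluation of a decision tree at a point `x : ℝ^p`. -/
noncomputable def eval {p : ℕ} : DTree p → (Fin p → ℝ) → ℕ
  | leaf c, _ => c
  | node j t L R, x => if x j ≤ t then L.eval x else R.eval x

/-- Depth `Φ(T)` of a decision tree. -/
def depth {p : ℕ} : DTree p → ℕ
  | leaf _ => 0
  | node _ _ L R => 1 + max L.depth R.depth

/-- Number of leaves `L(T)` of a decision tree. -/
def leaves {p : ℕ} : DTree p → ℕ
  | leaf _ => 1
  | node _ _ L R => L.leaves + R.leaves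

/-- The set of splits `(j, t)` occurring at internal nodes of a tree. -/
def splits {p : ℕ} : DTree p → Set (Fin p × ℝ)
  | leaf _ => ∅
  | node j t L R => insert (j, t) (L.splits ∪ R.splits)

end DTree

/-- A tree ensemble: a finite nonempty family of decision trees with positive weights. -/
structure Ensemble (p : ℕ) : Type where
  m : ℕ
  m_pos : 0 < m
  tree : Fin m → DTree p
  weight : Fin m → ℝ
  weight_pos : ∀ i, 0 < weight i

namespace Ensemble

/-- Total weight of the trees voting for class `c` at point `x`. -/
noncomputable def score {p : ℕ} (E : Ensemble p) (x : Fin p → ℝ) (c : ℕ) : ℝ :=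
  ∑ i ∈ Finset.univ.filter (fun i => (E.tree i).eval x = c), E.weight i

/-- The decision function of the ensemble: the smallest class maximizing the weighted vote. -/
noncomputable def F {p : ℕ} (E : Ensemble p) (x : Fin p → ℝ) : ℕ :=
  sInf {c : ℕ | ∀ c' : ℕ, E.score x c' ≤ E.score x c}

/-- The set `H j` of thresholds appearing in splits on feature `j` in trees of the ensemble. -/
def H {p : ℕ} (E : Ensemble p) (j : Fin p) : Set ℝ :=
  {t : ℝ | ∃ i, (j, t) ∈ (E.tree i).splits}

end Ensemble

/-- `T` is faithful to the ensemble `E` on the set `S`. -/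
def Faithful {p : ℕ} (T : DTree p) (E : Ensemble p) (S : Set (Fin p → ℝ)) : Prop :=
  ∀ x ∈ S, T.eval x = E.F x
/-- A cell: for each feature `j`, an index in `{0, …, n j}` (0-indexed version of `{1, …, |H_j|+1}`). -/
abbrev Cell {p : ℕ} (n : Fin p → ℕ) : Type := ∀ j, Fin (n j + 1)

/-- The open box `B(z)` associated with a cell `z`, given for each feature `j` the
increasing enumeration `h j : Fin (n j) → ℝ` of the thresholds: `x j` lies strictly above
every threshold of index `< z j` and strictly below every threshold of index `≥ z j`. -/
def Box {p : ℕ} (n : Fin p → ℕ) (h : ∀ j, Fin (n j) → ℝ) (z : Cell n) : Set (Fin p → ℝ) :=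
  {x | ∀ j, (∀ k : Fin (n j), (k : ℕ) < (z j : ℕ) → h j k < x j) ∧
            (∀ k : Fin (n j), (z j : ℕ) ≤ (k : ℕ) → x j < h j k)}

/-- The cell `z` is enclosed in the region `(zL, zR)`. -/
def Encl {p : ℕ} {n : Fin p → ℕ} (zL zR z : Cell n) : Prop :=
  ∀ j, (zL j : ℕ) ≤ (z j : ℕ) ∧ (z j : ℕ) ≤ (zR j : ℕ)

/-- The subset of `ℝ^p` covered by the region `(zL, zR)`: the union of the boxes of the
cells it encloses. -/
def RegionSet {p : ℕ} (n : Fin p → ℕ) (h : ∀ j, Fin (n j) → ℝ) (zL zR : Cell n) :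
    Set (Fin p → ℝ) :=
  ⋃ z ∈ {z : Cell n | Encl zL zR z}, Box n h z

/-- `Φ(zL, zR)`: the minimum depth of a decision tree faithful to `E` on the region `(zL, zR)`. -/
noncomputable def Phi {p : ℕ} (E : Ensemble p) (n : Fin p → ℕ) (h : ∀ j, Fin (n j) → ℝ)
    (zL zR : Cell n) : ℕ :=
  sInf {d : ℕ | ∃ T : DTree p, Faithful T E (RegionSet n h zL zR) ∧ T.depth = d}

/-- `Λ(zL, zR)`: the minimum number of leaves of a decision tree faithful to `E` on `(zL, zR)`. -/
noncomputable def Lam {p : ℕ} (E : Ensemble p) (n : Fin p → ℕ) (h : ∀ j, Fin (n j) → ℝ)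
    (zL zR : Cell n) : ℕ :=
  sInf {d : ℕ | ∃ T : DTree p, Faithful T E (RegionSet n h zL zR) ∧ T.leaves = d}

/-- `z^R_{jl}`: replace the `j`-th coordinate of `zR` by `l`. -/
def splitR {p : ℕ} {n : Fin p → ℕ} (zR : Cell n) (j : Fin p) (l : Fin (n j)) : Cell n :=
  Function.update zR j l.castSucc

/-- `z^L_{jl}`: replace the `j`-th coordinate of `zL` by `l + 1`. -/
def splitL {p : ℕ} {n : Fin p → ℕ} (zL : Cell n) (j : Fin p) (l : Fin (n j)) : Cell n :=
  Function.update zL j l.succ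

/-- The cells `z` and `z'` have the same (weighted majority) class under `E`. -/
def SameClass {p : ℕ} (E : Ensemble p) (n : Fin p → ℕ) (h : ∀ j, Fin (n j) → ℝ)
    (z z' : Cell n) : Prop :=
  ∀ x ∈ Box n h z, ∀ y ∈ Box n h z', E.F x = E.F y

open Classical in
/-- The indicator `𝟙_{jl}(z^L, z^R)`. -/
noncomputable def ind {p : ℕ} (E : Ensemble p) (n : Fin p → ℕ) (h : ∀ j, Fin (n j) → ℝ)
    (zL zR : Cell n) (j : Fin p) (l : Fin (n j)) : ℕ :=
  if Phi E n h zL (splitR zR j l) = 0 ∧ Phi E n h (splitL zL j l) zR = 0 ∧ SameClass E n h zL zR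
  then 0 else 1

/-!
Splitting the region `(zL, zR)` at level `l` of feature `j` cuts it into the two regions
`(zL, zR_{jl})` and `(zL_{jl}, zR)`. The ensemble is constant on the whole region iff it is
constant on each half with the same value, and since the (nonempty) boxes of `zL` and `zR` lie
in different halves, "the same value" is exactly `F(zL) = F(zR)`. As `Φ = 0` means that a single
leaf is faithful, i.e. that the ensemble is constant on the region, every admissible `(j, l)`
gives the same condition `Φ(zL, zR) = 0`.
-/

namespace DTree

variable {p : ℕ}

def graft : DTree p → (ℕ → DTree p) → DTree p
  | leaf c, k => k c
  | node j t L R, k => node j t (L.graft k) (R.graft k)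

theorem eval_graft (T : DTree p) (k : ℕ → DTree p) (x : Fin p → ℝ) :
    (T.graft k).eval x = (k (T.eval x)).eval x := by
  induction T with
  | leaf c => rfl
  | node j t L R ihL ihR =>
    simp only [graft, eval]
    split_ifs <;> assumption

def combine : List (DTree p) → (List ℕ → ℕ) → DTree p
  | [], g => leaf (g [])
  | t :: ts, g => t.graft fun c => combine ts fun cs => g (c :: cs)

theorem eval_combine (ts : List (DTree p)) (g : List ℕ → ℕ) (x : Fin p → ℝ) :
    (combine ts g).eval x = g (ts.map fun t => t.eval x) := by
  induction ts generalizing g with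
  | nil => rfl
  | cons t ts ih => simp [combine, eval_graft, ih]

theorem exists_eval_eq_of_factorsThrough (ts : List (DTree p)) (φ : (Fin p → ℝ) → ℕ)
    (hφ : φ.FactorsThrough fun x => ts.map fun t => t.eval x) :
    ∃ T : DTree p, ∀ x, T.eval x = φ x :=
  ⟨combine ts (Function.extend (fun x => ts.map fun t => t.eval x) φ 0), fun x => by
    rw [eval_combine, hφ.extend_apply]⟩

theorem depth_eq_zero_iff {T : DTree p} : T.depth = 0 ↔ ∃ c, T = leaf c := by
  cases T <;> simp [depth]

end DTree

namespace Ensemble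

variable {p : ℕ} (E : Ensemble p)

theorem F_eq_of_eval_eq {x y : Fin p → ℝ} (hxy : ∀ i, (E.tree i).eval x = (E.tree i).eval y) :
    E.F x = E.F y := by
  have hscore : E.score x = E.score y := by
    ext c
    simp only [score, hxy]
  simp only [F, hscore]

theorem exists_faithful (S : Set (Fin p → ℝ)) : ∃ T : DTree p, Faithful T E S := by
  obtain ⟨T, hT⟩ := DTree.exists_eval_eq_of_factorsThrough (List.ofFn E.tree) E.F
    fun x y hxy => E.F_eq_of_eval_eq fun i => by
      simpa [List.map_ofFn] using congrArg (·[i]?) hxy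
  exact ⟨T, fun x _ => hT x⟩

end Ensemble

theorem Phi_eq_zero_iff {p : ℕ} (E : Ensemble p) (n : Fin p → ℕ) (h : ∀ j, Fin (n j) → ℝ)
    (zL zR : Cell n) :
    Phi E n h zL zR = 0 ↔ ∃ c, ∀ x ∈ RegionSet n h zL zR, E.F x = c := by
  -- `sInf ∅ = 0`, so `Φ = 0` carries information only because faithful trees exist.
  obtain ⟨T, hT⟩ := E.exists_faithful (RegionSet n h zL zR)
  rw [Phi, Nat.sInf_eq_zero, Set.eq_empty_iff_forall_notMem]
  constructor
  · rintro (⟨T, hT, hdepth⟩ | hempty)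
    · obtain ⟨c, rfl⟩ := DTree.depth_eq_zero_iff.mp hdepth
      exact ⟨c, fun x hx => (hT x hx).symm⟩
    · exact absurd ⟨T, hT, rfl⟩ (hempty T.depth)
  · rintro ⟨c, hc⟩
    exact Or.inl ⟨DTree.leaf c, fun x hx => (hc x hx).symm, rfl⟩

theorem exists_forall_eq_union_iff {α β : Type*} (f : α → β) {A B P Q : Set α}
    (hP : P.Nonempty) (hQ : Q.Nonempty) (hPA : P ⊆ A) (hQB : Q ⊆ B) :
    ((∃ c, ∀ x ∈ A, f x = c) ∧ (∃ c, ∀ x ∈ B, f x = c) ∧ ∀ x ∈ P, ∀ y ∈ Q, f x = f y) ↔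
      ∃ c, ∀ x ∈ A ∪ B, f x = c := by
  constructor
  · rintro ⟨⟨a, ha⟩, ⟨b, hb⟩, hPQ⟩
    obtain ⟨x, hx⟩ := hP
    obtain ⟨y, hy⟩ := hQ
    have hab : a = b := by rw [← ha x (hPA hx), ← hb y (hQB hy), hPQ x hx y hy]
    exact ⟨a, fun z hz => hz.elim (ha z) fun hzB => hab ▸ hb z hzB⟩
  · rintro ⟨c, hc⟩
    refine ⟨⟨c, fun x hx => hc x (.inl hx)⟩, ⟨c, fun x hx => hc x (.inr hx)⟩, fun x hx y hy => ?_⟩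
    rw [hc x (.inl (hPA hx)), hc y (.inr (hQB hy))]

theorem StrictMono.exists_between_image {α : Type*} [LinearOrder α] [DenselyOrdered α]
    [NoMaxOrder α] [NoMinOrder α] [Nonempty α] {m : ℕ} {f : Fin m → α} (hf : StrictMono f)
    (i : ℕ) : ∃ x, (∀ k : Fin m, (k : ℕ) < i → f k < x) ∧ ∀ k : Fin m, i ≤ (k : ℕ) → x < f k := by
  obtain ⟨x, hlow, hup⟩ := Set.Finite.exists_between' (Set.toFinite (f '' {k | (k : ℕ) < i}))
    (Set.toFinite (f '' {k | i ≤ (k : ℕ)})) (by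
      rintro _ ⟨k, hk, rfl⟩ _ ⟨k', hk', rfl⟩
      exact hf (Fin.lt_def.mpr (lt_of_lt_of_le hk hk')))
  exact ⟨x, fun k hk => hlow _ ⟨k, hk, rfl⟩, fun k hk => hup _ ⟨k, hk, rfl⟩⟩

section Regions

variable {p : ℕ} {n : Fin p → ℕ} (h : ∀ j, Fin (n j) → ℝ)

theorem box_nonempty (hmono : ∀ j, StrictMono (h j)) (z : Cell n) : (Box n h z).Nonempty := by
  choose x hx using fun j => (hmono j).exists_between_image (z j)
  exact ⟨x, hx⟩

theorem box_subset_regionSet {zL zR z : Cell n} (hz : Encl zL zR z) :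
    Box n h z ⊆ RegionSet n h zL zR :=
  Set.subset_biUnion_of_mem (u := Box n h) hz

theorem regionSet_mono {zL zR zL' zR' : Cell n} (hL : ∀ j, (zL j : ℕ) ≤ zL' j)
    (hR : ∀ j, (zR' j : ℕ) ≤ zR j) : RegionSet n h zL' zR' ⊆ RegionSet n h zL zR :=
  Set.biUnion_subset_biUnion_left fun _ hz j => ⟨(hL j).trans (hz j).1, (hz j).2.trans (hR j)⟩

theorem val_splitR_apply (zR : Cell n) (j : Fin p) (l : Fin (n j)) (j' : Fin p) :
    (splitR zR j l j' : ℕ) = if j' = j then (l : ℕ) else zR j' := by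
  by_cases hj : j' = j
  · subst hj
    simp [splitR]
  · simp [splitR, hj]

theorem val_splitL_apply (zL : Cell n) (j : Fin p) (l : Fin (n j)) (j' : Fin p) :
    (splitL zL j l j' : ℕ) = if j' = j then (l : ℕ) + 1 else zL j' := by
  by_cases hj : j' = j
  · subst hj
    simp [splitL]
  · simp [splitL, hj]

theorem Encl.splitR_or_splitL {zL zR z : Cell n} (hz : Encl zL zR z) (j : Fin p)
    (l : Fin (n j)) : Encl zL (splitR zR j l) z ∨ Encl (splitL zL j l) zR z := by
  by_cases hzj : (z j : ℕ) ≤ l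
  · refine .inl fun j' => ?_
    rw [val_splitR_apply]
    split_ifs with hj
    · subst hj
      exact ⟨(hz j').1, hzj⟩
    · exact hz j'
  · refine .inr fun j' => ?_
    rw [val_splitL_apply]
    split_ifs with hj
    · subst hj
      exact ⟨by omega, (hz j').2⟩
    · exact hz j'

theorem regionSet_eq_union_split {zL zR : Cell n} {j : Fin p} {l : Fin (n j)}
    (hl1 : (zL j : ℕ) ≤ l + 1) (hl2 : (l : ℕ) ≤ zR j) :
    RegionSet n h zL zR = RegionSet n h zL (splitR zR j l) ∪ RegionSet n h (splitL zL j l) zR := by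
  refine subset_antisymm (Set.iUnion₂_subset fun z hz => ?_) (Set.union_subset ?_ ?_)
  · rcases Encl.splitR_or_splitL hz j l with hleft | hright
    · exact (box_subset_regionSet h hleft).trans Set.subset_union_left
    · exact (box_subset_regionSet h hright).trans Set.subset_union_right
  · refine regionSet_mono h (fun _ => le_rfl) fun j' => ?_
    rw [val_splitR_apply]
    split_ifs with hj
    · exact hj ▸ hl2
    · exact le_rfl
  · refine regionSet_mono h (fun j' => ?_) fun _ => le_rfl
    rw [val_splitL_apply]
    split_ifs with hj
    · exact hj ▸ hl1
    · exact le_rfl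

end Regions

theorem split_conditions_iff_Phi_eq_zero {p : ℕ} (E : Ensemble p) (n : Fin p → ℕ)
    (h : ∀ j, Fin (n j) → ℝ) (hmono : ∀ j, StrictMono (h j)) (zL zR : Cell n)
    (hreg : ∀ j, (zL j : ℕ) ≤ (zR j : ℕ)) (j : Fin p) (l : Fin (n j))
    (hl1 : (zL j : ℕ) ≤ (l : ℕ)) (hl2 : (l : ℕ) < (zR j : ℕ)) :
    (Phi E n h zL (splitR zR j l) = 0 ∧ Phi E n h (splitL zL j l) zR = 0 ∧
        SameClass E n h zL zR) ↔ Phi E n h zL zR = 0 := by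
  have hzL : Encl zL (splitR zR j l) zL := fun j' => by
    rw [val_splitR_apply]
    split_ifs with hj
    · exact ⟨le_rfl, hj ▸ hl1⟩
    · exact ⟨le_rfl, hreg j'⟩
  have hzR : Encl (splitL zL j l) zR zR := fun j' => by
    rw [val_splitL_apply]
    split_ifs with hj
    · exact ⟨hj ▸ hl2, le_rfl⟩
    · exact ⟨hreg j', le_rfl⟩
  simp only [Phi_eq_zero_iff, regionSet_eq_union_split h (by omega : (zL j : ℕ) ≤ l + 1) hl2.le]
  exact exists_forall_eq_union_iff E.F (box_nonempty h hmono zL) (box_nonempty h hmono zR)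
    (box_subset_regionSet h hzL) (box_subset_regionSet h hzR)

theorem ind_eq_ite {p : ℕ} (E : Ensemble p) (n : Fin p → ℕ)
    (h : ∀ j, Fin (n j) → ℝ) (hmono : ∀ j, StrictMono (h j)) (zL zR : Cell n)
    (hreg : ∀ j, (zL j : ℕ) ≤ (zR j : ℕ)) (j : Fin p) (l : Fin (n j))
    (hl1 : (zL j : ℕ) ≤ (l : ℕ)) (hl2 : (l : ℕ) < (zR j : ℕ)) :
    ind E n h zL zR j l = if Phi E n h zL zR = 0 then 0 else 1 := by
  classical
  simp only [ind, split_conditions_iff_Phi_eq_zero E n h hmono zL zR hreg j l hl1 hl2]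

theorem indicator_independent_general {p : ℕ} (E : Ensemble p) (n : Fin p → ℕ)
    (h : ∀ j, Fin (n j) → ℝ)
    (hmono : ∀ j, StrictMono (h j))
    (zL zR : Cell n) (hreg : ∀ j, (zL j : ℕ) ≤ (zR j : ℕ))
    (j : Fin p) (l : Fin (n j)) (hl1 : (zL j : ℕ) ≤ (l : ℕ)) (hl2 : (l : ℕ) < (zR j : ℕ)) :
    ((Phi E n h zL (splitR zR j l) = 0 ∧ Phi E n h (splitL zL j l) zR = 0 ∧
        SameClass E n h zL zR) ↔ Phi E n h zL zR = 0) ∧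
    (∀ (j' : Fin p) (l' : Fin (n j')), (zL j' : ℕ) ≤ (l' : ℕ) → (l' : ℕ) < (zR j' : ℕ) →
      ind E n h zL zR j l = ind E n h zL zR j' l') :=
  ⟨split_conditions_iff_Phi_eq_zero E n h hmono zL zR hreg j l hl1 hl2, fun j' l' hl1' hl2' => by
    rw [ind_eq_ite E n h hmono zL zR hreg j l hl1 hl2,
      ind_eq_ite E n h hmono zL zR hreg j' l' hl1' hl2']⟩

/-- For a feature `j` and level `l` with `zL j ≤ l < zR j`, the conjunction
`Φ(zL, zR_{jl}) = Φ(zL_{jl}, zR) = 0 ∧ F_𝒯(zL) = F_𝒯(zR)` holds iff `Φ(zL, zR) = 0`; hence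
the indicator `𝟙_{jl}(zL, zR)` takes the same value for all admissible pairs `(j, l)`. -/
theorem indicator_independent {p : ℕ} (E : Ensemble p) (n : Fin p → ℕ)
    (h : ∀ j, Fin (n j) → ℝ)
    (hmono : ∀ j, StrictMono (h j)) (hcov : ∀ j, E.H j = Set.range (h j))
    (zL zR : Cell n) (hreg : ∀ j, (zL j : ℕ) ≤ (zR j : ℕ))
    (j : Fin p) (l : Fin (n j)) (hl1 : (zL j : ℕ) ≤ (l : ℕ)) (hl2 : (l : ℕ) < (zR j : ℕ)) :
    ((Phi E n h zL (splitR zR j l) = 0 ∧ Phi E n h (splitL zL j l) zR = 0 ∧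
        SameClass E n h zL zR) ↔ Phi E n h zL zR = 0) ∧
    (∀ (j' : Fin p) (l' : Fin (n j')), (zL j' : ℕ) ≤ (l' : ℕ) → (l' : ℕ) < (zR j' : ℕ) →
      ind E n h zL zR j l = ind E n h zL zR j' l') :=
  indicator_independent_general E n h hmono zL zR hreg j l hl1 hl2
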